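/- Let f : ℝ⁴ → ℝ² be given by f(x, y, z, w) = (x, y·(x² + y² + z² + w²)). Then: (i) the critical set Σ_f = {x : rank of the Fréchet derivative of f at x is < 2} equals {0}; (ii) for every η ≠ 0, f⁻¹((η, 0)) = {(η, 0, z, w) : z, w ∈ ℝ}; and (iii) for every ε and η with 0 < η < ε, the Milnor fiber f⁻¹((η, 0)) ∩ B_ε⁴ is homeomorphic to the closed unit disk in ℝ². -/

import Mathlib

open Metric Topology Set

noncomputable section

namespace TrivAux

abbrev E4 := EuclideanSpace ℝ (Fin 4)
abbrev E2 := EuclideanSpace ℝ (Fin 2)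

def P (i : Fin 4) : E4 →L[ℝ] ℝ := EuclideanSpace.proj i

def Q (x : E4) : ℝ := x 0 ^ 2 + x 1 ^ 2 + x 2 ^ 2 + x 3 ^ 2

def qd (x : E4) : E4 →L[ℝ] ℝ :=
  (2 * x 0) • P 0 + (2 * x 1) • P 1 + (2 * x 2) • P 2 + (2 * x 3) • P 3

def row2 (x : E4) : E4 →L[ℝ] ℝ := x 1 • qd x + Q x • P 1

def e2 : E2 ≃L[ℝ] (Fin 2 → ℝ) := PiLp.continuousLinearEquiv 2 ℝ _

def L (x : E4) : E4 →L[ℝ] E2 :=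
  (e2.symm : (Fin 2 → ℝ) →L[ℝ] E2).comp (ContinuousLinearMap.pi ![P 0, row2 x])

lemma hq (x : E4) : HasFDerivAt Q (qd x) x := by
  have h : ∀ i : Fin 4, HasFDerivAt (fun v : E4 => v i ^ 2) ((2 * x i) • P i) x := by
    intro i
    have hm := ((P i).hasFDerivAt (x := x)).mul ((P i).hasFDerivAt (x := x))
    have he : (fun v : E4 => v i ^ 2) = fun v => v i * v i := by funext v; ring
    rw [he]
    have e : ((2 * x i) • P i) = (P i) x • P i + (P i) x • P i := by
      ext v
      simp [P]
      ring
    rw [e]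
    exact hm
  exact (((h 0).add (h 1)).add (h 2)).add (h 3)

lemma hasFDeriv (x : E4) :
    HasFDerivAt (fun v : E4 => (e2.symm ![v 0, v 1 * Q v] : E2)) (L x) x := by
  apply e2.symm.comp_hasFDerivAt_iff.mpr
  apply hasFDerivAt_pi'.mpr
  intro i
  fin_cases i
  · simp [ContinuousLinearMap.proj_pi]
    exact (P 0).hasFDerivAt (x := x)
  · have h1 := ((P 1).hasFDerivAt (x := x)).mul (hq x)
    simp [ContinuousLinearMap.proj_pi, row2, P]
    exact h1

lemma f_eq (f : E4 → E2)
    (hf : ∀ v : E4, f v 0 = v 0 ∧ f v 1 = v 1 * ((v 0) ^ 2 + (v 1) ^ 2 + (v 2) ^ 2 + (v 3) ^ 2)) :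
    f = fun v : E4 => (e2.symm ![v 0, v 1 * Q v] : E2) := by
  funext v
  apply e2.injective
  funext i
  fin_cases i
  · simpa [e2, Q] using (hf v).1
  · simpa [e2, Q] using (hf v).2

lemma fderiv_eq (f : E4 → E2)
    (hf : ∀ v : E4, f v 0 = v 0 ∧ f v 1 = v 1 * ((v 0) ^ 2 + (v 1) ^ 2 + (v 2) ^ 2 + (v 3) ^ 2))
    (x : E4) : fderiv ℝ f x = L x := by
  rw [f_eq f hf]
  exact (hasFDeriv x).fderiv

lemma Q_pos {x : E4} (hx : x ≠ 0) : 0 < Q x := by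
  rcases lt_or_eq_of_le (show (0:ℝ) ≤ Q x by unfold Q; positivity) with h | h
  · exact h
  · exfalso
    apply hx
    unfold Q at h
    have h0 : x 0 = 0 := by nlinarith [sq_nonneg (x 0), sq_nonneg (x 1), sq_nonneg (x 2), sq_nonneg (x 3)]
    have h1 : x 1 = 0 := by nlinarith [sq_nonneg (x 0), sq_nonneg (x 1), sq_nonneg (x 2), sq_nonneg (x 3)]
    have h2 : x 2 = 0 := by nlinarith [sq_nonneg (x 0), sq_nonneg (x 1), sq_nonneg (x 2), sq_nonneg (x 3)]
    have h3 : x 3 = 0 := by nlinarith [sq_nonneg (x 0), sq_nonneg (x 1), sq_nonneg (x 2), sq_nonneg (x 3)]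
    ext i
    fin_cases i <;> simp [h0, h1, h2, h3]

lemma L_surj {x : E4} (hx : x ≠ 0) : Function.Surjective (L x) := by
  intro y
  have hQ := Q_pos hx
  have hb : (0:ℝ) < Q x + 2 * x 1 ^ 2 := by nlinarith [sq_nonneg (x 1)]
  refine ⟨(WithLp.equiv 2 (Fin 4 → ℝ)).symm
    ![y 0, (y 1 - x 1 * (2 * x 0) * y 0) / (Q x + 2 * x 1 ^ 2), 0, 0], ?_⟩
  apply e2.injective
  funext i
  fin_cases i
  · simp [L, e2, P]
  · simp [L, e2, P, row2, qd]
    field_simp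
    ring

lemma rank_L_ne {x : E4} (hx : x ≠ 0) :
    Module.finrank ℝ (LinearMap.range (L x).toLinearMap) = 2 := by
  have : LinearMap.range (L x).toLinearMap = ⊤ := LinearMap.range_eq_top.mpr (L_surj hx)
  rw [this, finrank_top]
  simp

lemma rank_L_zero : Module.finrank ℝ (LinearMap.range (L 0).toLinearMap) < 2 := by
  have hne : LinearMap.range (L 0).toLinearMap ≠ ⊤ := by
    intro h
    have hmem : (e2.symm ![0, 1] : E2) ∈ LinearMap.range (L 0).toLinearMap := h ▸ Submodule.mem_top
    obtain ⟨v, hv⟩ := hmem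
    have := congrFun (congrArg e2 hv) 1
    simp [L, e2, row2, Q, qd, P] at this
  have := Submodule.finrank_lt hne (K := ℝ) (V := E2)
  simpa using this

end TrivAux

open TrivAux

/-- The critical set of `f : ℝⁿ → ℝᵖ`: points where the rank of the Fréchet derivative is `< p`. -/
def criticalSet (n p : ℕ) (f : EuclideanSpace ℝ (Fin n) → EuclideanSpace ℝ (Fin p)) :
    Set (EuclideanSpace ℝ (Fin n)) :=
  {x | Module.finrank ℝ (LinearMap.range (fderiv ℝ f x).toLinearMap) < p}

/-- For `f(x, y, z, w) = (x, y·(x² + y² + z² + w²))`: (i) the critical set of `f` is `{0}`;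
(ii) for `η ≠ 0` the fiber `f⁻¹((η,0))` is the 2-plane `{(η, 0, z, w)}`; (iii) for `0 < η < ε`
the Milnor fiber `f⁻¹((η,0)) ∩ B_ε⁴` is homeomorphic to the closed unit disk in `ℝ²`. -/
theorem trivial_example_r4_r2 (f : EuclideanSpace ℝ (Fin 4) → EuclideanSpace ℝ (Fin 2))
    (hf : ∀ v : EuclideanSpace ℝ (Fin 4),
      f v 0 = v 0 ∧ f v 1 = v 1 * ((v 0) ^ 2 + (v 1) ^ 2 + (v 2) ^ 2 + (v 3) ^ 2)) :
    criticalSet 4 2 f = {0} ∧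
    (∀ η : ℝ, η ≠ 0 → ∀ y : EuclideanSpace ℝ (Fin 2), y 0 = η → y 1 = 0 →
      f ⁻¹' {y} = {v : EuclideanSpace ℝ (Fin 4) | v 0 = η ∧ v 1 = 0}) ∧
    (∀ ε η : ℝ, 0 < η → η < ε → ∀ y : EuclideanSpace ℝ (Fin 2), y 0 = η → y 1 = 0 →
      Nonempty (↥(f ⁻¹' {y} ∩ closedBall (0 : EuclideanSpace ℝ (Fin 4)) ε) ≃ₜ
        ↥(closedBall (0 : EuclideanSpace ℝ (Fin 2)) 1))) := by
  have hfib : ∀ η : ℝ, η ≠ 0 → ∀ y : EuclideanSpace ℝ (Fin 2), y 0 = η → y 1 = 0 →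
      f ⁻¹' {y} = {v : EuclideanSpace ℝ (Fin 4) | v 0 = η ∧ v 1 = 0} := by
    intro η hη y hy0 hy1
    ext v
    simp only [mem_preimage, mem_singleton_iff, mem_setOf_eq]
    constructor
    · intro hv
      have h0 : v 0 = η := by rw [← (hf v).1, hv, hy0]
      have h1 : v 1 * ((v 0) ^ 2 + (v 1) ^ 2 + (v 2) ^ 2 + (v 3) ^ 2) = 0 := by
        rw [← (hf v).2, hv, hy1]
      have hpos : (0:ℝ) < (v 0) ^ 2 + (v 1) ^ 2 + (v 2) ^ 2 + (v 3) ^ 2 := by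
        have hη2 : η ^ 2 > 0 := by positivity
        rw [h0]
        nlinarith [sq_nonneg (v 1), sq_nonneg (v 2), sq_nonneg (v 3)]
      refine ⟨h0, ?_⟩
      rcases mul_eq_zero.mp h1 with h | h
      · exact h
      · exact absurd h (ne_of_gt hpos)
    · rintro ⟨h0, h1⟩
      ext i
      fin_cases i
      · simpa [(hf v).1, hy0] using h0
      · simp [(hf v).2, hy1, h1]
  refine ⟨?_, hfib, ?_⟩
  · ext x
    simp only [criticalSet, mem_setOf_eq, mem_singleton_iff]
    rw [fderiv_eq f hf x]
    constructor
    · intro h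
      by_contra hx
      rw [rank_L_ne hx] at h
      exact lt_irrefl _ h
    · rintro rfl
      exact rank_L_zero
  · intro ε η hη hηε y hy0 hy1
    rw [hfib η (ne_of_gt hη) y hy0 hy1]
    have hε : 0 < ε := hη.trans hηε
    set r := Real.sqrt (ε ^ 2 - η ^ 2) with hrdef
    have hr2 : r ^ 2 = ε ^ 2 - η ^ 2 := Real.sq_sqrt (by nlinarith)
    have hr : 0 < r := Real.sqrt_pos.mpr (by nlinarith)
    have norm4_le : ∀ (v : E4) (c : ℝ), 0 ≤ c →
        (‖v‖ ≤ c ↔ v 0 ^ 2 + v 1 ^ 2 + v 2 ^ 2 + v 3 ^ 2 ≤ c ^ 2) := by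
      intro v c hc
      rw [EuclideanSpace.norm_eq]
      rw [show c = Real.sqrt (c ^ 2) by rw [Real.sqrt_sq hc]]
      rw [Real.sqrt_le_sqrt_iff (by positivity), Real.sqrt_sq hc]
      simp [Fin.sum_univ_four, sq_abs]
    have norm2_le : ∀ (u : E2) (c : ℝ), 0 ≤ c →
        (‖u‖ ≤ c ↔ u 0 ^ 2 + u 1 ^ 2 ≤ c ^ 2) := by
      intro u c hc
      rw [EuclideanSpace.norm_eq]
      rw [show c = Real.sqrt (c ^ 2) by rw [Real.sqrt_sq hc]]
      rw [Real.sqrt_le_sqrt_iff (by positivity), Real.sqrt_sq hc]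
      simp [Fin.sum_univ_two, sq_abs]
    exact ⟨{
      toFun := fun v => ⟨(WithLp.equiv 2 (Fin 2 → ℝ)).symm ![v.1 2 / r, v.1 3 / r], by
        have hv := v.2
        obtain ⟨⟨h0, h1⟩, hball⟩ := hv
        rw [mem_closedBall, dist_zero_right] at hball ⊢
        rw [norm4_le _ _ hε.le, h0, h1] at hball
        rw [norm2_le _ _ zero_le_one]
        simp only [WithLp.equiv_symm_apply, PiLp.toLp_apply, Matrix.cons_val_zero, Matrix.cons_val_one,
          Matrix.head_cons]
        rw [div_pow, div_pow, ← add_div, one_pow, div_le_one (by positivity)]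
        nlinarith⟩,
      invFun := fun u => ⟨(WithLp.equiv 2 (Fin 4 → ℝ)).symm ![η, 0, r * u.1 0, r * u.1 1], by
        have hu := u.2
        rw [mem_closedBall, dist_zero_right, norm2_le _ _ zero_le_one] at hu
        constructor
        · constructor <;> simp
        · rw [mem_closedBall, dist_zero_right, norm4_le _ _ hε.le]
          simp only [WithLp.equiv_symm_apply, PiLp.toLp_apply, Matrix.cons_val_zero, Matrix.cons_val_one,
            Matrix.head_cons, Matrix.cons_val_two, Matrix.tail_cons, Matrix.cons_val_three]
          nlinarith⟩,
      left_inv := by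
        rintro ⟨v, ⟨h0, h1⟩, hball⟩
        apply Subtype.ext
        ext i
        fin_cases i <;> simp [WithLp.equiv_symm_apply, PiLp.toLp_apply, h0, h1] <;>
          rw [mul_comm, div_mul_cancel₀ _ hr.ne'],
      right_inv := by
        rintro ⟨u, hu⟩
        apply Subtype.ext
        ext i
        fin_cases i <;> simp [WithLp.equiv_symm_apply, PiLp.toLp_apply] <;>
          rw [mul_comm, mul_div_assoc, div_self hr.ne', mul_one],
      continuous_toFun := by
        apply Continuous.subtype_mk
        refine Continuous.comp (PiLp.continuousLinearEquiv 2 ℝ (fun _ : Fin 2 => ℝ)).symm.continuous ?_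
        refine continuous_pi fun i => ?_
        fin_cases i <;>
          exact (((EuclideanSpace.proj _).continuous.comp continuous_subtype_val).div_const r),
      continuous_invFun := by
        apply Continuous.subtype_mk
        refine Continuous.comp (PiLp.continuousLinearEquiv 2 ℝ (fun _ : Fin 4 => ℝ)).symm.continuous ?_
        refine continuous_pi fun i => ?_
        fin_cases i
        · exact continuous_const
        · exact continuous_const
        · exact continuous_const.mul ((EuclideanSpace.proj _).continuous.comp continuous_subtype_val)
        · exact continuous_const.mul ((EuclideanSpace.proj _).continuous.comp continuous_subtype_val) }⟩
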